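/- Every C*-algebra A has a largest closed two-sided ideal with bounded trace: there is a closed two-sided ideal J of A such that J has bounded trace and every closed two-sided ideal of A with bounded trace is contained in J. -/
import Mathlib


noncomputable section

open scoped ComplexInnerProductSpace ENNReal

/-- A bundled complex Hilbert space. -/
structure HilbertBundle : Type 1 where
  carrier : Type
  [nacg : NormedAddCommGroup carrier]
  [ips : InnerProductSpace ℂ carrier]
  [cs : CompleteSpace carrier]

attribute [instance] HilbertBundle.nacg HilbertBundle.ips HilbertBundle.cs

/-- A representation of a (possibly non-unital) C⋆-algebra on a Hilbert space, i.e. a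
⋆-homomorphism into the bounded operators. -/
structure CStarRep (B : Type) [NonUnitalCStarAlgebra B] : Type 1 where
  space : HilbertBundle
  π : B →⋆ₙₐ[ℂ] (space.carrier →L[ℂ] space.carrier)

/-- An `A`–`B` imprimitivity bimodule: a complex vector space `X` which is a full left Hilbert
`A`-module and a full right Hilbert `B`-module, with commuting actions, satisfying
`⟨x,y⟩_A ⬝ z = x ⬝ ⟨y,z⟩_B`.  The `A`-valued inner product is linear in the first variable and
the `B`-valued one in the second.  `X` is complete for the norm `‖x‖ = ‖⟨x,x⟩_B‖^{1/2}`
(which coincides with `‖⟨x,x⟩_A‖^{1/2}`). -/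
structure ImprimitivityBimodule (A B : Type) [NonUnitalCStarAlgebra A]
    [NonUnitalCStarAlgebra B] : Type 1 where
  X : Type
  [nacg : NormedAddCommGroup X]
  [nsp : NormedSpace ℂ X]
  [cs : CompleteSpace X]
  smulA : A → X → X
  smulB : X → B → X
  innA : X → X → A
  innB : X → X → B
  -- `X` is a left `A`-module
  smulA_add : ∀ a x y, smulA a (x + y) = smulA a x + smulA a y
  add_smulA : ∀ a a' x, smulA (a + a') x = smulA a x + smulA a' x
  mul_smulA : ∀ a a' x, smulA (a * a') x = smulA a (smulA a' x)
  smulA_smul : ∀ (c : ℂ) a x, smulA (c • a) x = c • smulA a x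
  smulA_smul' : ∀ (c : ℂ) a x, smulA a (c • x) = c • smulA a x
  -- `X` is a right `B`-module
  smulB_add : ∀ x y b, smulB (x + y) b = smulB x b + smulB y b
  smulB_add' : ∀ x b b', smulB x (b + b') = smulB x b + smulB x b'
  smulB_mul : ∀ x b b', smulB x (b * b') = smulB (smulB x b) b'
  smulB_smul : ∀ (c : ℂ) x b, smulB x (c • b) = c • smulB x b
  smulB_smul' : ∀ (c : ℂ) x b, smulB (c • x) b = c • smulB x b
  -- the two actions commute
  smul_commutes : ∀ a x b, smulB (smulA a x) b = smulA a (smulB x b)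
  -- the `A`-valued inner product (linear in the first variable)
  innA_add : ∀ x y z, innA (x + y) z = innA x z + innA y z
  innA_add' : ∀ x y z, innA x (y + z) = innA x y + innA x z
  innA_smul : ∀ (c : ℂ) x y, innA (c • x) y = c • innA x y
  innA_star : ∀ x y, star (innA x y) = innA y x
  innA_smulA : ∀ a x y, innA (smulA a x) y = a * innA x y
  innA_pos : ∀ x, ∃ a, innA x x = star a * a
  innA_definite : ∀ x, innA x x = 0 → x = 0
  -- the `B`-valued inner product (linear in the second variable)
  innB_add : ∀ x y z, innB (x + y) z = innB x z + innB y z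
  innB_add' : ∀ x y z, innB x (y + z) = innB x y + innB x z
  innB_smul : ∀ (c : ℂ) x y, innB x (c • y) = c • innB x y
  innB_star : ∀ x y, star (innB x y) = innB y x
  innB_smulB : ∀ x y b, innB x (smulB y b) = innB x y * b
  innB_pos : ∀ x, ∃ b, innB x x = star b * b
  innB_definite : ∀ x, innB x x = 0 → x = 0
  -- the norm on `X` is the Hilbert-module norm for both inner products
  norm_innA : ∀ x, ‖x‖ ^ 2 = ‖innA x x‖
  norm_innB : ∀ x, ‖x‖ ^ 2 = ‖innB x x‖
  -- fullness of both inner products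
  full_innA : closure (Submodule.span ℂ {a : A | ∃ x y, a = innA x y} : Set A) = Set.univ
  full_innB : closure (Submodule.span ℂ {b : B | ∃ x y, b = innB x y} : Set B) = Set.univ
  -- the imprimitivity condition `⟨x,y⟩_A ⬝ z = x ⬝ ⟨y,z⟩_B`
  imprimitivity : ∀ x y z, smulA (innA x y) z = smulB x (innB y z)

attribute [instance] ImprimitivityBimodule.nacg ImprimitivityBimodule.nsp
  ImprimitivityBimodule.cs
/-- (Topological) irreducibility of a representation: it is non-zero and has no non-trivial
closed invariant subspaces. -/
def CStarRep.Irreducible {B : Type} [NonUnitalCStarAlgebra B] (ρ : CStarRep B) : Prop :=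
  (∃ b, ρ.π b ≠ 0) ∧
    ∀ K : Submodule ℂ ρ.space.carrier, IsClosed (K : Set ρ.space.carrier) →
      (∀ b, ∀ x ∈ K, ρ.π b x ∈ K) → K = ⊥ ∨ K = ⊤

/-- The irreducible representations of `B`; together with the topology below this serves as
the spectrum `B̂` of `B` (all notions considered here are invariant under unitary
equivalence, so may be computed on representatives). -/
def IrrRep (B : Type) [NonUnitalCStarAlgebra B] : Type 1 := {ρ : CStarRep B // ρ.Irreducible}

/-- The topology on the spectrum: the pullback along `π ↦ ker π` of the Jacobson (hull-kernel)
topology on `Prim B`; the sets `{π | π(b) ≠ 0}` form a subbasis for it. -/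
instance (B : Type) [NonUnitalCStarAlgebra B] : TopologicalSpace (IrrRep B) :=
  TopologicalSpace.generateFrom {U | ∃ b : B, U = {ρ : IrrRep B | ρ.1.π b ≠ 0}}
/-- The trace of a (positive) bounded operator, with values in `[0,∞]`: the supremum over all
finite orthonormal families `(e)` of `Σ_e ⟨e, S e⟩`.  For positive `S` this agrees with
`Σ_i ⟨e_i, S e_i⟩` computed in any orthonormal basis. -/
def posTrace {H : Type} [NormedAddCommGroup H] [InnerProductSpace ℂ H]
    (S : H →L[ℂ] H) : ℝ≥0∞ :=
  ⨆ (s : Finset H) (_ : Orthonormal ℂ (fun v : s => (v : H))),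
    ∑ e ∈ s, ENNReal.ofReal (⟪e, S e⟫).re

/-- An element of a C⋆-algebra is positive when it is of the form `c*c`. -/
def IsPos {A : Type} [NonUnitalCStarAlgebra A] (a : A) : Prop := ∃ c, a = star c * c

/-- The function `π ↦ tr π(a)` on the spectrum. -/
def traceFn {A : Type} [NonUnitalCStarAlgebra A] (a : A) : IrrRep A → ℝ≥0∞ :=
  fun ρ => posTrace (ρ.1.π a)

/-- The ideal `m(A)` of continuous-trace elements:
`span{a ∈ A⁺ : π ↦ tr π(a) is finite and continuous on Â}`. -/
def mIdeal (A : Type) [NonUnitalCStarAlgebra A] : Set A :=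
  (Submodule.span ℂ {a : A | IsPos a ∧ (∀ ρ : IrrRep A, traceFn a ρ ≠ ⊤) ∧
    Continuous (traceFn a)} : Set A)

/-- The ideal `t(A)` of bounded-trace elements:
`span{a ∈ A⁺ : π ↦ tr π(a) is bounded on Â}`. -/
def tIdeal (A : Type) [NonUnitalCStarAlgebra A] : Set A :=
  (Submodule.span ℂ {a : A | IsPos a ∧ ∃ M : ℝ≥0∞, M ≠ ⊤ ∧
    ∀ ρ : IrrRep A, traceFn a ρ ≤ M} : Set A)
/-- A closed two-sided ideal of a C⋆-algebra. -/
def IsCStarIdeal {A : Type} [NonUnitalCStarAlgebra A] (I : Submodule ℂ A) : Prop :=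
  IsClosed (I : Set A) ∧ (∀ a, ∀ x ∈ I, a * x ∈ I) ∧ (∀ a, ∀ x ∈ I, x * a ∈ I)

/-- The Rieffel correspondence associated to an imprimitivity bimodule `X`:
`X-Ind I = closed span{⟨x,y⟩_A : x, y ∈ X⬝I}` where `X⬝I = closed span{x⬝b : x ∈ X, b ∈ I}`. -/
def ImprimitivityBimodule.indIdeal {A B : Type} [NonUnitalCStarAlgebra A]
    [NonUnitalCStarAlgebra B] (E : ImprimitivityBimodule A B) (I : Set B) : Set A :=
  closure (Submodule.span ℂ {a : A | ∃ x ∈ closure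
      (Submodule.span ℂ {v : E.X | ∃ w, ∃ b ∈ I, v = E.smulB w b} : Set E.X),
    ∃ y ∈ closure
      (Submodule.span ℂ {v : E.X | ∃ w, ∃ b ∈ I, v = E.smulB w b} : Set E.X),
    a = E.innA x y} : Set A)
/-- A closed two-sided ideal `I` of `A` has bounded trace if `I`, regarded as a C⋆-algebra in
its own right, has bounded trace.  Via the canonical identification of the spectrum of `I`
with the set of irreducible representations of `A` not vanishing on `I` (which preserves the
traces, and under which the representations of `A` vanishing on `I` contribute trace `0`),
this says exactly that `I` is contained in the closure of the span of its positive elements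
`a` for which `π ↦ tr π(a)` is bounded on `Â`. -/
def HasBoundedTrace {A : Type} [NonUnitalCStarAlgebra A] (I : Submodule ℂ A) : Prop :=
  (I : Set A) ⊆ closure (Submodule.span ℂ {a : A | a ∈ I ∧ IsPos a ∧
    ∃ M : ℝ≥0∞, M ≠ ⊤ ∧ ∀ ρ : IrrRep A, traceFn a ρ ≤ M} : Set A)
/-- Every C⋆-algebra `A` has a largest closed two-sided ideal with bounded
trace: there is a closed two-sided ideal `J` of `A` which has bounded trace and contains
every closed two-sided ideal of `A` with bounded trace. -/
theorem exists_largest_boundedTrace_ideal (A : Type) [NonUnitalCStarAlgebra A] :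
    ∃ J : Submodule ℂ A, IsCStarIdeal J ∧ HasBoundedTrace J ∧
      ∀ I : Submodule ℂ A, IsCStarIdeal I → HasBoundedTrace I → I ≤ J := by
  classical
  set S : Set (Submodule ℂ A) := {I | IsCStarIdeal I ∧ HasBoundedTrace I} with hS
  set K : Submodule ℂ A := sSup S with hK
  set J : Submodule ℂ A := K.topologicalClosure with hJ
  have hspan : K = Submodule.span ℂ (⋃ I ∈ S, (I : Set A)) := by
    refine le_antisymm (sSup_le fun I hI => ?_) (Submodule.span_le.2 ?_)
    · intro x hx
      exact Submodule.subset_span (Set.mem_biUnion hI hx)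
    · intro x hx
      simp only [Set.mem_iUnion] at hx
      obtain ⟨I, hI, hxI⟩ := hx
      exact le_sSup hI hxI
  -- multiplication stability of K
  have hKmul_left : ∀ a : A, ∀ x ∈ K, a * x ∈ K := by
    intro a x hx
    have hx' : x ∈ Submodule.span ℂ (⋃ I ∈ S, (I : Set A)) := by
      rwa [← hspan]
    refine Submodule.span_induction ?_ ?_ ?_ ?_ hx'
    · intro y hy
      simp only [Set.mem_iUnion] at hy
      obtain ⟨I, hI, hyI⟩ := hy
      exact le_sSup hI (hI.1.2.1 a y hyI)
    · simpa using (K.zero_mem)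
    · intro y z _ _ hy hz
      simpa [mul_add] using K.add_mem hy hz
    · intro c y _ hy
      simpa [mul_smul_comm] using K.smul_mem c hy
  have hKmul_right : ∀ a : A, ∀ x ∈ K, x * a ∈ K := by
    intro a x hx
    have hx' : x ∈ Submodule.span ℂ (⋃ I ∈ S, (I : Set A)) := by
      rwa [← hspan]
    refine Submodule.span_induction ?_ ?_ ?_ ?_ hx'
    · intro y hy
      simp only [Set.mem_iUnion] at hy
      obtain ⟨I, hI, hyI⟩ := hy
      exact le_sSup hI (hI.1.2.2 a y hyI)
    · simpa using (K.zero_mem)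
    · intro y z _ _ hy hz
      simpa [add_mul] using K.add_mem hy hz
    · intro c y _ hy
      simpa [smul_mul_assoc] using K.smul_mem c hy
  have hKJ : K ≤ J := Submodule.le_topologicalClosure K
  refine ⟨J, ⟨K.isClosed_topologicalClosure, ?_, ?_⟩, ?_, ?_⟩
  · -- left ideal
    intro a x hx
    have hx' : x ∈ closure (K : Set A) := hx
    have hmaps : Set.MapsTo (fun y => a * y) (K : Set A) (K : Set A) :=
      fun y hy => hKmul_left a y hy
    exact (hmaps.closure (continuous_const.mul continuous_id)) hx'
  · -- right ideal
    intro a x hx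
    have hx' : x ∈ closure (K : Set A) := hx
    have hmaps : Set.MapsTo (fun y => y * a) (K : Set A) (K : Set A) :=
      fun y hy => hKmul_right a y hy
    exact (hmaps.closure (continuous_id.mul continuous_const)) hx'
  · -- J has bounded trace
    set T : Set A := {a : A | a ∈ J ∧ IsPos a ∧
      ∃ M : ℝ≥0∞, M ≠ ⊤ ∧ ∀ ρ : IrrRep A, traceFn a ρ ≤ M} with hT
    set M : Submodule ℂ A := (Submodule.span ℂ T).topologicalClosure with hM
    have hKM : K ≤ M := by
      rw [hK, sSup_le_iff]
      intro I hI
      intro x hxI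
      have hx' : x ∈ closure (Submodule.span ℂ {a : A | a ∈ I ∧ IsPos a ∧
          ∃ Mb : ℝ≥0∞, Mb ≠ ⊤ ∧ ∀ ρ : IrrRep A, traceFn a ρ ≤ Mb} : Set A) :=
        hI.2 hxI
      have hsub : {a : A | a ∈ I ∧ IsPos a ∧
          ∃ Mb : ℝ≥0∞, Mb ≠ ⊤ ∧ ∀ ρ : IrrRep A, traceFn a ρ ≤ Mb} ⊆ T := by
        rintro a ⟨haI, hpos, hb⟩
        exact ⟨hKJ (le_sSup hI haI), hpos, hb⟩
      exact closure_mono (Submodule.span_mono hsub) hx'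
    intro x hx
    have : J ≤ M :=
      Submodule.topologicalClosure_minimal K hKM (Submodule.isClosed_topologicalClosure _)
    exact this hx
  · intro I hI hbt
    have hIS : I ∈ S := ⟨hI, hbt⟩
    exact le_trans (le_sSup hIS) hKJ
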